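/- arXiv:2101.07881 — 4 statements merged into one kernel-verified Lean document; each statement's English description precedes it below -/
import Mathlib

section
/- Let P ⊆ [0,1]^d be a finite nonempty set and P* ⊆ P a nonempty subset. Then max over q in the closed grid Γ̄(P) of δ(q,P*) equals max over q in Γ̄(P*) of δ(q,P*), where δ(q,S) := λ(q) − D(q,S)/|S|, λ(q) = ∏_j q_j, and Γ̄(S) := Γ̄^1(S) × ⋯ × Γ̄^d(S) with Γ̄^j(S) := {p_j : p ∈ S} ∪ {1}. -/
open Finset
open scoped Classical

def unitCube (d : ℕ) : Set (Fin d → ℝ) := {q | ∀ j, 0 ≤ q j ∧ q j ≤ 1}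

noncomputable def Dopen {d : ℕ} (q : Fin d → ℝ) (P : Finset (Fin d → ℝ)) : ℕ :=
  (P.filter fun p => ∀ j, p j < q j).card

noncomputable def Dclosed {d : ℕ} (q : Fin d → ℝ) (P : Finset (Fin d → ℝ)) : ℕ :=
  (P.filter fun p => ∀ j, p j ≤ q j).card

def vol {d : ℕ} (q : Fin d → ℝ) : ℝ := ∏ j, q j
/-- The closed grid `Γ̄(S)`: all points whose `j`-th coordinate is a `j`-th
coordinate of a point of `S` or equals `1`. -/
def GammaBar {d : ℕ} (S : Finset (Fin d → ℝ)) : Set (Fin d → ℝ) :=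
  {q | ∀ j, (∃ p ∈ S, p j = q j) ∨ q j = 1}

/-- Local discrepancy `δ(q,S) = λ(q) - D(q,S)/|S|`. -/
noncomputable def deltaLo {d : ℕ} (q : Fin d → ℝ) (S : Finset (Fin d → ℝ)) : ℝ :=
  vol q - (Dopen q S : ℝ) / S.card

/-!
Round every coordinate of a grid point `q ∈ Γ̄(P)` up to the least element of `Γ̄^j(P*)` that is
`≥ q_j`; this exists because `1 ∈ Γ̄^j(P*)` and `q_j ≤ 1`. No coordinate of a point of `P*` lies in
a gap `[q_j, q'_j)`, so the open box `[0, q')` contains the same points of `P*` as `[0, q)`, while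
the volume can only grow. Hence every value of `δ(·, P*)` on `Γ̄(P)` is dominated by one on
`Γ̄(P*) ⊆ Γ̄(P)`.
-/

/-- `⨆ x ∈ S, f x` unfolds to `⨆ x, ⨆ _ : x ∈ S, f x`, which takes the junk value `sSup ∅ = 0`
off `S`; the witness `y₀` keeps that value below both suprema. -/
lemma Real.biSup_eq_biSup_of_forall_exists_le {α : Type*} {S T : Set α} {f : α → ℝ}
    (hS : S.Finite) (hTS : T ⊆ S) {y₀ : α} (hy₀ : y₀ ∈ T) (hfy₀ : 0 ≤ f y₀)
    (h : ∀ x ∈ S, ∃ y ∈ T, f x ≤ f y) :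
    ⨆ x ∈ S, f x = ⨆ x ∈ T, f x := by
  have hbdd : ∀ U ⊆ S, BddAbove (f '' U) := fun U hU => ((hS.subset hU).image f).bddAbove
  have hsSup : ∀ U ⊆ S, y₀ ∈ U → sSup (f '' U) = ⨆ x ∈ U, f x := fun U hUS hU => by
    have hrange : BddAbove (Set.range fun x : U => f x) := Set.image_eq_range f U ▸ hbdd U hUS
    refine csSup_image hrange ?_
    rw [Real.sSup_empty]
    exact hfy₀.trans (le_ciSup hrange ⟨y₀, hU⟩)
  rw [← hsSup S le_rfl (hTS hy₀), ← hsSup T hTS hy₀]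
  refine le_antisymm ?_ (csSup_le_csSup (hbdd S le_rfl) ⟨_, y₀, hy₀, rfl⟩ (Set.image_mono hTS))
  refine csSup_le ⟨_, y₀, hTS hy₀, rfl⟩ ?_
  rintro _ ⟨x, hx, rfl⟩
  obtain ⟨y, hy, hxy⟩ := h x hx
  exact hxy.trans (le_csSup (hbdd T hTS) ⟨y, hy, rfl⟩)

lemma Finset.exists_ge_forall_lt_imp_lt {α : Type*} [LinearOrder α] (A : Finset α) {t : α}
    (ht : ∃ a ∈ A, t ≤ a) : ∃ x ∈ A, t ≤ x ∧ ∀ a ∈ A, a < x → a < t := by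
  have hne : (A.filter (t ≤ ·)).Nonempty := by simpa [Finset.filter_nonempty_iff] using ht
  obtain ⟨hxA, htx⟩ := Finset.mem_filter.mp ((A.filter (t ≤ ·)).min'_mem hne)
  refine ⟨_, hxA, htx, fun a ha hax => lt_of_not_ge fun hta => hax.not_ge ?_⟩
  exact Finset.min'_le _ _ (Finset.mem_filter.mpr ⟨ha, hta⟩)

section Grid

variable {d : ℕ}

lemma gammaBar_finite (S : Finset (Fin d → ℝ)) : (GammaBar S).Finite := by
  refine (Set.Finite.pi fun j => ((S.image (· j)).finite_toSet.insert 1)).subset ?_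
  intro q hq j _
  rcases hq j with ⟨p, hp, hpq⟩ | hq1
  · exact Or.inr (Finset.mem_coe.mpr (Finset.mem_image.mpr ⟨p, hp, hpq⟩))
  · exact Or.inl hq1

lemma one_mem_gammaBar (S : Finset (Fin d → ℝ)) : (fun _ => (1 : ℝ)) ∈ GammaBar S :=
  fun _ => Or.inr rfl

lemma gammaBar_mono {S T : Finset (Fin d → ℝ)} (h : S ⊆ T) : GammaBar S ⊆ GammaBar T :=
  fun _ hq j => (hq j).imp (fun ⟨p, hp, hpq⟩ => ⟨p, h hp, hpq⟩) id

lemma gammaBar_subset_unitCube {S : Finset (Fin d → ℝ)} (hS : ∀ p ∈ S, p ∈ unitCube d) :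
    GammaBar S ⊆ unitCube d := by
  intro q hq j
  rcases hq j with ⟨p, hp, hpq⟩ | hq1
  · exact hpq ▸ hS p hp j
  · simp [hq1]

lemma exists_mem_gammaBar_ge_dopen_eq (S : Finset (Fin d → ℝ)) {q : Fin d → ℝ}
    (hq : ∀ j, q j ≤ 1) : ∃ q' ∈ GammaBar S, q ≤ q' ∧ Dopen q' S = Dopen q S := by
  have hcoord : ∀ j, ∃ x ∈ insert 1 (S.image (· j)), q j ≤ x ∧
      ∀ a ∈ insert 1 (S.image (· j)), a < x → a < q j := fun j =>
    Finset.exists_ge_forall_lt_imp_lt _ ⟨1, Finset.mem_insert_self _ _, hq j⟩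
  choose q' hq'mem hle hgap using hcoord
  refine ⟨q', fun j => ?_, hle, ?_⟩
  · rcases Finset.mem_insert.mp (hq'mem j) with h1 | hp
    · exact Or.inr h1
    · exact Or.inl (by simpa using hp)
  · refine congrArg Finset.card (Finset.filter_congr fun p hp => ⟨fun h j => ?_, fun h j => ?_⟩)
    · exact hgap j (p j) (Finset.mem_insert_of_mem (Finset.mem_image_of_mem _ hp)) (h j)
    · exact (h j).trans_le (hle j)

lemma vol_le_vol {q q' : Fin d → ℝ} (h0 : 0 ≤ q) (hle : q ≤ q') : vol q ≤ vol q' :=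
  Finset.prod_le_prod (fun j _ => h0 j) (fun j _ => hle j)

lemma deltaLo_le_deltaLo {S : Finset (Fin d → ℝ)} {q q' : Fin d → ℝ} (h0 : 0 ≤ q)
    (hle : q ≤ q') (hD : Dopen q' S = Dopen q S) : deltaLo q S ≤ deltaLo q' S := by
  unfold deltaLo
  rw [hD]
  linarith [vol_le_vol h0 hle]

lemma deltaLo_one_nonneg (S : Finset (Fin d → ℝ)) : 0 ≤ deltaLo (fun _ => (1 : ℝ)) S := by
  have hD : (Dopen (fun _ => (1 : ℝ)) S : ℝ) ≤ S.card := by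
    exact_mod_cast Finset.card_filter_le _ _
  rw [deltaLo, vol, Finset.prod_const_one, sub_nonneg]
  exact div_le_one_of_le₀ hD (Nat.cast_nonneg _)

end Grid

theorem stmt3_general {d : ℕ} (P Pstar : Finset (Fin d → ℝ))
    (hP : ∀ p ∈ P, p ∈ unitCube d) (hsub : Pstar ⊆ P) :
    (⨆ q ∈ GammaBar P, deltaLo q Pstar) = ⨆ q ∈ GammaBar Pstar, deltaLo q Pstar := by
  refine Real.biSup_eq_biSup_of_forall_exists_le (gammaBar_finite P) (gammaBar_mono hsub)
    (one_mem_gammaBar Pstar) (deltaLo_one_nonneg Pstar) fun q hq => ?_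
  have hcube := gammaBar_subset_unitCube hP hq
  obtain ⟨q', hq', hle, hD⟩ := exists_mem_gammaBar_ge_dopen_eq Pstar fun j => (hcube j).2
  exact ⟨q', hq', deltaLo_le_deltaLo (fun j => (hcube j).1) hle hD⟩

theorem stmt3 {d : ℕ} (P Pstar : Finset (Fin d → ℝ))
    (hP : ∀ p ∈ P, p ∈ unitCube d) (hsub : Pstar ⊆ P)
    (hPne : P.Nonempty) (hne : Pstar.Nonempty) :
    (⨆ q ∈ GammaBar P, deltaLo q Pstar) = ⨆ q ∈ GammaBar Pstar, deltaLo q Pstar :=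
  stmt3_general P Pstar hP hsub
end

section
/- Let P ⊆ [0,1]^d be a finite nonempty set and P* ⊆ P a nonempty subset. Then max over q in the grid Γ(P) of δ̄(q,P*) equals max over q in Γ(P*) of δ̄(q,P*), where δ̄(q,S) := D̄(q,S)/|S| − λ(q), D̄(q,S) counts points of S in [0,q], λ(q) = ∏_j q_j, and Γ(S) := Γ^1(S) × ⋯ × Γ^d(S) with Γ^j(S) := {p_j : p ∈ S}. -/
open Finset
open scoped Classical

/-- The grid `Γ(S)`: all points whose `j`-th coordinate is a `j`-th coordinate
of a point of `S`. -/
def Gamma {d : ℕ} (S : Finset (Fin d → ℝ)) : Set (Fin d → ℝ) :=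
  {q | ∀ j, ∃ p ∈ S, p j = q j}

/-- Local discrepancy `δ̄(q,S) = D̄(q,S)/|S| - λ(q)`. -/
noncomputable def deltaUp {d : ℕ} (q : Fin d → ℝ) (S : Finset (Fin d → ℝ)) : ℝ :=
  (Dclosed q S : ℝ) / S.card - vol q

lemma deltaUp_le_one {d : ℕ} (q : Fin d → ℝ) (S : Finset (Fin d → ℝ))
    (hq : ∀ j, 0 ≤ q j) (hS : S.Nonempty) : deltaUp q S ≤ 1 := by
  have hcard : (0 : ℝ) < S.card := by exact_mod_cast hS.card_pos
  have h1 : (Dclosed q S : ℝ) ≤ S.card := by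
    exact_mod_cast Finset.card_filter_le _ _
  have h2 : (0:ℝ) ≤ vol q := Finset.prod_nonneg fun j _ => hq j
  have : (Dclosed q S : ℝ) / S.card ≤ 1 := by
    rw [div_le_one hcard]; exact h1
  unfold deltaUp; linarith

/-- coordinates of Gamma points lie in [0,1] -/
lemma gamma_cube {d : ℕ} {S : Finset (Fin d → ℝ)} (hS : ∀ p ∈ S, p ∈ unitCube d)
    {q : Fin d → ℝ} (hq : q ∈ Gamma S) : ∀ j, 0 ≤ q j ∧ q j ≤ 1 := by
  intro j
  obtain ⟨p, hp, hpq⟩ := hq j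
  rw [← hpq]; exact hS p hp j

/-- the coordinatewise maximum has nonnegative discrepancy -/
lemma exists_nonneg {d : ℕ} (Pstar : Finset (Fin d → ℝ))
    (hPs : ∀ p ∈ Pstar, p ∈ unitCube d) (hne : Pstar.Nonempty) :
    ∃ q' ∈ Gamma Pstar, 0 ≤ deltaUp q' Pstar := by
  have hcard : (0 : ℝ) < Pstar.card := by exact_mod_cast hne.card_pos
  have hImne : ∀ j : Fin d, (Pstar.image fun p => p j).Nonempty :=
    fun j => hne.image _
  refine ⟨fun j => (Pstar.image fun p => p j).max' (hImne j), ?_, ?_⟩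
  · intro j
    have h := Finset.max'_mem _ (hImne j)
    rw [Finset.mem_image] at h
    exact h
  · have hq'le1 : ∀ j, 0 ≤ ((Pstar.image fun p => p j).max' (hImne j)) ∧
        ((Pstar.image fun p => p j).max' (hImne j)) ≤ 1 := by
      intro j
      have h := Finset.max'_mem _ (hImne j)
      rw [Finset.mem_image] at h
      obtain ⟨p, hp, hpj⟩ := h
      rw [← hpj]; exact hPs p hp j
    have hDall : Dclosed (fun j => (Pstar.image fun p => p j).max' (hImne j)) Pstar
        = Pstar.card := by
      unfold Dclosed
      congr 1
      rw [Finset.filter_eq_self]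
      intro p hp j
      exact Finset.le_max' _ _ (Finset.mem_image_of_mem (fun r => r j) hp)
    have hvq' : vol (fun j => (Pstar.image fun p => p j).max' (hImne j)) ≤ 1 := by
      calc vol (fun j => (Pstar.image fun p => p j).max' (hImne j))
          ≤ ∏ _j : Fin d, (1:ℝ) :=
            Finset.prod_le_prod (fun j _ => (hq'le1 j).1) (fun j _ => (hq'le1 j).2)
        _ = 1 := by simp
    unfold deltaUp
    rw [hDall, div_self (ne_of_gt hcard)]
    linarith

lemma key {d : ℕ} (P Pstar : Finset (Fin d → ℝ))
    (hP : ∀ p ∈ P, p ∈ unitCube d) (hsub : Pstar ⊆ P) (hne : Pstar.Nonempty) :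
    ∀ q ∈ Gamma P, ∃ q' ∈ Gamma Pstar, deltaUp q Pstar ≤ deltaUp q' Pstar := by
  intro q hq
  have hPs : ∀ p ∈ Pstar, p ∈ unitCube d := fun p hp => hP p (hsub hp)
  have hqc := gamma_cube hP hq
  have hcard : (0 : ℝ) < Pstar.card := by exact_mod_cast hne.card_pos
  by_cases hall : ∀ j, ∃ p ∈ Pstar, p j ≤ q j
  · -- round down each coordinate
    have hFne : ∀ j, ((Pstar.filter fun p => p j ≤ q j).image fun p => p j).Nonempty := by
      intro j
      obtain ⟨p, hp, hpq⟩ := hall j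
      exact ⟨p j, Finset.mem_image_of_mem _ (Finset.mem_filter.2 ⟨hp, hpq⟩)⟩
    set q' : Fin d → ℝ := fun j =>
      ((Pstar.filter fun p => p j ≤ q j).image fun p => p j).max' (hFne j) with hq'def
    have hq'mem : ∀ j, ∃ p ∈ Pstar, p j = q' j := by
      intro j
      have h := Finset.max'_mem _ (hFne j)
      rw [Finset.mem_image] at h
      obtain ⟨p, hp, hpj⟩ := h
      exact ⟨p, (Finset.mem_filter.1 hp).1, hpj⟩
    have hq'le : ∀ j, q' j ≤ q j := by
      intro j
      apply Finset.max'_le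
      intro y hy
      rw [Finset.mem_image] at hy
      obtain ⟨p, hp, hpj⟩ := hy
      rw [← hpj]; exact (Finset.mem_filter.1 hp).2
    have hq'nonneg : ∀ j, 0 ≤ q' j := by
      intro j
      obtain ⟨p, hp, hpj⟩ := hq'mem j
      rw [← hpj]; exact (hPs p hp j).1
    refine ⟨q', hq'mem, ?_⟩
    have hD : Dclosed q Pstar = Dclosed q' Pstar := by
      unfold Dclosed
      congr 1
      apply Finset.filter_congr
      intro p hp
      constructor
      · intro h j
        exact Finset.le_max' ((Pstar.filter fun r => r j ≤ q j).image fun r => r j)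
          (p j) (Finset.mem_image_of_mem (fun r => r j)
            (Finset.mem_filter.2 ⟨hp, h j⟩))
      · intro h j
        exact le_trans (h j) (hq'le j)
    have hvol : vol q' ≤ vol q :=
      Finset.prod_le_prod (fun j _ => hq'nonneg j) (fun j _ => hq'le j)
    unfold deltaUp
    rw [hD]
    linarith
  · -- Dclosed q Pstar = 0; take coordinatewise max
    push_neg at hall
    obtain ⟨j0, hj0⟩ := hall
    have hD0 : Dclosed q Pstar = 0 := by
      unfold Dclosed
      rw [Finset.card_eq_zero, Finset.filter_eq_empty_iff]
      intro p hp h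
      exact absurd (h j0) (not_le.2 (hj0 p hp))
    obtain ⟨q', hq'G, hq'0⟩ := exists_nonneg Pstar hPs hne
    refine ⟨q', hq'G, ?_⟩
    have hvq : 0 ≤ vol q := Finset.prod_nonneg fun j _ => (hqc j).1
    have : deltaUp q Pstar = -vol q := by
      unfold deltaUp
      rw [hD0]; push_cast; rw [zero_div]; ring
    linarith

theorem stmt4 {d : ℕ} (P Pstar : Finset (Fin d → ℝ))
    (hP : ∀ p ∈ P, p ∈ unitCube d) (hsub : Pstar ⊆ P)
    (hPne : P.Nonempty) (hne : Pstar.Nonempty) :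
    (⨆ q ∈ Gamma P, deltaUp q Pstar) = ⨆ q ∈ Gamma Pstar, deltaUp q Pstar := by
  have hPsc : ∀ p ∈ Pstar, p ∈ unitCube d := fun p hp => hP p (hsub hp)
  have hinnerP : ∀ q : Fin d → ℝ, (⨆ _ : q ∈ Gamma P, deltaUp q Pstar) ≤ 1 := by
    intro q
    by_cases h : q ∈ Gamma P
    · rw [ciSup_pos h]
      exact deltaUp_le_one q Pstar (fun j => (gamma_cube hP h j).1) hne
    · have : IsEmpty (q ∈ Gamma P) := ⟨h⟩
      rw [Real.iSup_of_isEmpty]; norm_num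
  have hinnerPs : ∀ q : Fin d → ℝ, (⨆ _ : q ∈ Gamma Pstar, deltaUp q Pstar) ≤ 1 := by
    intro q
    by_cases h : q ∈ Gamma Pstar
    · rw [ciSup_pos h]
      exact deltaUp_le_one q Pstar (fun j => (gamma_cube hPsc h j).1) hne
    · have : IsEmpty (q ∈ Gamma Pstar) := ⟨h⟩
      rw [Real.iSup_of_isEmpty]; norm_num
  have hbddP : BddAbove (Set.range fun q => ⨆ _ : q ∈ Gamma P, deltaUp q Pstar) := by
    refine ⟨1, ?_⟩; rintro x ⟨q, rfl⟩; exact hinnerP q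
  have hbddPs : BddAbove (Set.range fun q => ⨆ _ : q ∈ Gamma Pstar, deltaUp q Pstar) := by
    refine ⟨1, ?_⟩; rintro x ⟨q, rfl⟩; exact hinnerPs q
  have hGsub : Gamma Pstar ⊆ Gamma P := by
    intro q hq j
    obtain ⟨p, hp, hpj⟩ := hq j
    exact ⟨p, hsub hp, hpj⟩
  have hmemPs : ∀ q' ∈ Gamma Pstar,
      deltaUp q' Pstar ≤ ⨆ q ∈ Gamma Pstar, deltaUp q Pstar := by
    intro q' hq'
    refine le_trans ?_ (le_ciSup hbddPs q')
    rw [ciSup_pos hq']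
  have hmemP : ∀ q' ∈ Gamma P,
      deltaUp q' Pstar ≤ ⨆ q ∈ Gamma P, deltaUp q Pstar := by
    intro q' hq'
    refine le_trans ?_ (le_ciSup hbddP q')
    rw [ciSup_pos hq']
  obtain ⟨q0, hq0G, hq00⟩ := exists_nonneg Pstar hPsc hne
  apply le_antisymm
  · apply ciSup_le
    intro q
    by_cases h : q ∈ Gamma P
    · rw [ciSup_pos h]
      obtain ⟨q', hq', hle⟩ := key P Pstar hP hsub hne q h
      exact le_trans hle (hmemPs q' hq')
    · have : IsEmpty (q ∈ Gamma P) := ⟨h⟩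
      rw [Real.iSup_of_isEmpty]
      exact le_trans hq00 (hmemPs q0 hq0G)
  · apply ciSup_le
    intro q
    by_cases h : q ∈ Gamma Pstar
    · rw [ciSup_pos h]
      exact hmemP q (hGsub h)
    · have : IsEmpty (q ∈ Gamma Pstar) := ⟨h⟩
      rw [Real.iSup_of_isEmpty]
      exact le_trans hq00 (hmemP q0 (hGsub hq0G))
end

section
/- Let G = (V,E) be a graph with |V| = n, and fix reals 0 < β < α < 1/n. Define points p_1,…,p_n ∈ [0,1]^n by p_i^j := α if (i,j) ∈ E or i = j, and p_i^j := β otherwise. For a subset T ⊆ V, let P_T := {p_i : i ∈ T}. Then the volume of the smallest closed anchored box containing all points of P_T equals α^n if T is a dominating set of G, and is at most α^{n−1}·β < α^n if T is not a dominating set. -/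
open Finset
open scoped Classical

theorem stmt12 (n : ℕ) (hn : 0 < n) (G : SimpleGraph (Fin n)) (α β : ℝ)
    (hβ : 0 < β) (hβα : β < α) (hα : α < 1 / n)
    (p : Fin n → Fin n → ℝ)
    (hp : ∀ i j, p i j = if G.Adj i j ∨ i = j then α else β)
    (T : Finset (Fin n)) (hT : T.Nonempty)
    (q : Fin n → ℝ) (hq : ∀ j, q j = T.sup' hT fun i => p i j) :
    ((∀ v, v ∉ T → ∃ t ∈ T, G.Adj v t) → ∏ j, q j = α ^ n) ∧
    (¬ (∀ v, v ∉ T → ∃ t ∈ T, G.Adj v t) → ∏ j, q j ≤ α ^ (n - 1) * β) ∧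
    α ^ (n - 1) * β < α ^ n := by
  have hα0 : 0 < α := hβ.trans hβα
  have hple : ∀ i j, p i j ≤ α := by
    intro i j; rw [hp]; split
    · exact le_refl _
    · exact hβα.le
  have hpge : ∀ i j, β ≤ p i j := by
    intro i j; rw [hp]; split
    · exact hβα.le
    · exact le_refl _
  have hqle : ∀ j, q j ≤ α := by
    intro j; rw [hq]; exact Finset.sup'_le _ _ fun i _ => hple i j
  have hqge : ∀ j, β ≤ q j := by
    intro j; rw [hq]
    obtain ⟨t, ht⟩ := hT
    exact le_trans (hpge t j) (Finset.le_sup' (fun i => p i _) ht)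
  refine ⟨?_, ?_, ?_⟩
  · intro hdom
    have hqa : ∀ j, q j = α := by
      intro j
      refine le_antisymm (hqle j) ?_
      by_cases hj : j ∈ T
      · have : p j j = α := by rw [hp]; simp
        rw [hq]; exact this ▸ Finset.le_sup' (fun i => p i _) hj
      · obtain ⟨t, ht, hadj⟩ := hdom j hj
        have : p t j = α := by rw [hp]; simp [hadj.symm]
        rw [hq]; exact this ▸ Finset.le_sup' (fun i => p i _) ht
    simp [hqa]
  · intro hnd
    push_neg at hnd
    obtain ⟨v, hv, hno⟩ := hnd
    have hqv : q v = β := by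
      rw [hq]
      refine le_antisymm (Finset.sup'_le _ _ fun i hi => ?_) ?_
      · rw [hp]
        have h1 : ¬ G.Adj i v := fun h => hno i hi h.symm
        have h2 : ¬ i = v := fun h => hv (h ▸ hi)
        simp [h1, h2]
      · obtain ⟨t, ht⟩ := hT
        exact le_trans (hpge t v) (Finset.le_sup' (fun i => p i _) ht)
    have hsplit : ∏ j, q j = q v * ∏ j ∈ Finset.univ.erase v, q j :=
      (Finset.mul_prod_erase _ _ (Finset.mem_univ v)).symm
    have hcard : (Finset.univ.erase v).card = n - 1 := by
      rw [Finset.card_erase_of_mem (Finset.mem_univ v), Finset.card_univ, Fintype.card_fin]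
    have hprod : ∏ j ∈ Finset.univ.erase v, q j ≤ α ^ (n - 1) := by
      calc ∏ j ∈ Finset.univ.erase v, q j ≤ ∏ _j ∈ Finset.univ.erase v, α :=
            Finset.prod_le_prod (fun j _ => le_trans hβ.le (hqge j)) (fun j _ => hqle j)
        _ = α ^ (n - 1) := by rw [Finset.prod_const, hcard]
      -- ensured nonneg
    rw [hsplit, hqv, mul_comm]
    exact mul_le_mul_of_nonneg_right hprod hβ.le
  · have hpow : α ^ n = α ^ (n - 1) * α := by
      conv_lhs => rw [← Nat.succ_pred_eq_of_pos hn]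
      rw [pow_succ, Nat.pred_eq_sub_one]
    rw [hpow]
    exact mul_lt_mul_of_pos_left hβα (pow_pos hα0 _)
end

section
/- In dimension 1, for any finite set Q = {x_1 < x_2 < ⋯ < x_k} ⊆ [0,1], the star discrepancy satisfies d*(Q) = 1/(2k) + max_{i=1..k} |x_i − (2i−1)/(2k)| (Niederreiter's formula). -/
open Finset
open scoped Classical

/-- Number of points of `Q` in `[0,q)`. -/
noncomputable def D1open (q : ℝ) (Q : Finset ℝ) : ℕ := (Q.filter fun p => p < q).card

/-- Number of points of `Q` in `[0,q]`. -/
noncomputable def D1closed (q : ℝ) (Q : Finset ℝ) : ℕ := (Q.filter fun p => p ≤ q).card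

/-- One-dimensional L∞ star discrepancy (supremum of local discrepancies). -/
noncomputable def starDisc1 (Q : Finset ℝ) : ℝ :=
  ⨆ q ∈ Set.Icc (0 : ℝ) 1,
    max (q - (D1open q Q : ℝ) / Q.card) ((D1closed q Q : ℝ) / Q.card - q)

/-!
For sorted points `x₀ < ⋯ < x_{k-1}` and `q ∈ [0,1]`, let `A` be the number of points below
`q`. Then `x_A ≥ q` (or `A = k`), so `q - A/k ≤ x_A - A/k`; dually, if `B` points lie in `[0,q]`
then `B/k - q ≤ B/k - x_{B-1}`. Hence the local discrepancy is maximised at one of the points, and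
at `q = x_i` it equals `max (x_i - i/k) ((i+1)/k - x_i) = 1/(2k) + |x_i - (2i+1)/(2k)|`.
-/

-- For `a ∉ s` the inner supremum is the junk value `sSup ∅ = 0`.
theorem Real.biSup_eq_of_isGreatest {α : Type*} {f : α → ℝ} {s : Set α} {S : ℝ}
    (h : IsGreatest (f '' s) S) (hS : 0 ≤ S) : ⨆ a ∈ s, f a = S := by
  obtain ⟨⟨a, ha, rfl⟩, hle⟩ := h
  have : Nonempty α := ⟨a⟩
  refine ciSup_eq_of_forall_le_of_forall_lt_exists_gt (ι := α)
    (fun b => Real.iSup_le (fun hb => hle ⟨b, hb, rfl⟩) hS) fun w hw => ⟨a, ?_⟩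
  rwa [ciSup_pos ha]

namespace Niederreiter

section Counting

variable {α : Type*} [LinearOrder α] {k : ℕ} {x : Fin k → α}

theorem card_filter_lt_le_iff (hx : Monotone x) (q : α) (j : Fin k) :
    #{i | x i < q} ≤ j ↔ q ≤ x j := by
  constructor
  · intro hA
    by_contra! hj
    have hsub : Iic j ⊆ ({i | x i < q} : Finset (Fin k)) := fun i hi =>
      mem_filter.mpr ⟨mem_univ i, (hx (mem_Iic.mp hi)).trans_lt hj⟩
    have := card_le_card hsub
    rw [Fin.card_Iic] at this
    omega
  · intro hj
    have hsub : ({i | x i < q} : Finset (Fin k)) ⊆ Iio j := fun i hi =>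
      mem_Iio.mpr (hx.reflect_lt ((mem_filter.mp hi).2.trans_le hj))
    simpa using card_le_card hsub

theorem lt_card_filter_le_iff (hx : Monotone x) (q : α) (j : Fin k) :
    (j : ℕ) < #{i | x i ≤ q} ↔ x j ≤ q := by
  constructor
  · intro hB
    by_contra! hj
    have hsub : ({i | x i ≤ q} : Finset (Fin k)) ⊆ Iio j := fun i hi =>
      mem_Iio.mpr (hx.reflect_lt ((mem_filter.mp hi).2.trans_lt hj))
    have := card_le_card hsub
    rw [Fin.card_Iio] at this
    omega
  · intro hj
    have hsub : Iic j ⊆ ({i | x i ≤ q} : Finset (Fin k)) := fun i hi =>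
      mem_filter.mpr ⟨mem_univ i, (hx (mem_Iic.mp hi)).trans hj⟩
    simpa using card_le_card hsub

theorem card_filter_lt_apply (hx : StrictMono x) (j : Fin k) : #{i | x i < x j} = j := by
  rw [← Fin.card_Iio j]
  congr 1
  ext i
  simp [hx.lt_iff_lt]

theorem card_filter_le_apply (hx : StrictMono x) (j : Fin k) : #{i | x i ≤ x j} = j + 1 := by
  rw [← Fin.card_Iic j]
  congr 1
  ext i
  simp [hx.le_iff_le]

end Counting

section Bounds

variable {k : ℕ} {x : Fin k → ℝ}

theorem sub_card_filter_lt_div_le (hx : Monotone x) (hk : 0 < k) {q : ℝ} (hq : q ≤ 1) :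
    q - #{i | x i < q} / (k : ℝ) ≤ 0 ∨
      ∃ j : Fin k, q - #{i | x i < q} / (k : ℝ) ≤ x j - j / k := by
  by_cases hA : #{i | x i < q} < k
  · right
    refine ⟨⟨_, hA⟩, ?_⟩
    have := (card_filter_lt_le_iff hx q ⟨_, hA⟩).mp le_rfl
    dsimp only
    linarith
  · left
    have hA : #{i | x i < q} = k :=
      le_antisymm ((card_filter_le _ _).trans_eq (card_fin k)) (not_lt.mp hA)
    rw [hA, div_self (by positivity)]
    linarith

theorem card_filter_le_div_sub_le (hx : Monotone x) {q : ℝ} (hq : 0 ≤ q) :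
    #{i | x i ≤ q} / (k : ℝ) - q ≤ 0 ∨
      ∃ j : Fin k, #{i | x i ≤ q} / (k : ℝ) - q ≤ (j + 1) / k - x j := by
  obtain hB | hB := Nat.eq_zero_or_pos #{i | x i ≤ q}
  · left
    rw [hB]
    simpa using hq
  · right
    have hBk : #{i | x i ≤ q} - 1 < k :=
      (Nat.sub_lt hB one_pos).trans_le ((card_filter_le _ _).trans_eq (card_fin k))
    refine ⟨⟨_, hBk⟩, ?_⟩
    have := (lt_card_filter_le_iff hx q ⟨_, hBk⟩).mp (Nat.sub_lt hB one_pos)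
    simp only [Nat.cast_sub hB, Nat.cast_one, sub_add_cancel]
    linarith

theorem max_sub_div_add_one_div_sub (hk : k ≠ 0) (a j : ℝ) :
    max (a - j / k) ((j + 1) / k - a) = 1 / (2 * k) + |a - (2 * j + 1) / (2 * k)| := by
  rw [abs_eq_max_neg, ← max_add_add_left]
  congr 1 <;> field_simp <;> ring

end Bounds

noncomputable def localDisc1 (Q : Finset ℝ) (q : ℝ) : ℝ :=
  max (q - (D1open q Q : ℝ) / Q.card) ((D1closed q Q : ℝ) / Q.card - q)

theorem starDisc1_eq_biSup (Q : Finset ℝ) :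
    starDisc1 Q = ⨆ q ∈ Set.Icc (0 : ℝ) 1, localDisc1 Q q := rfl

section Image

variable {k : ℕ} {x : Fin k → ℝ}

theorem D1open_image (hx : Function.Injective x) (q : ℝ) :
    D1open q (univ.image x) = #{i | x i < q} := by
  rw [D1open, filter_image, card_image_of_injective _ hx]

theorem D1closed_image (hx : Function.Injective x) (q : ℝ) :
    D1closed q (univ.image x) = #{i | x i ≤ q} := by
  rw [D1closed, filter_image, card_image_of_injective _ hx]

theorem localDisc1_image (hx : Function.Injective x) (q : ℝ) :
    localDisc1 (univ.image x) q =
      max (q - #{i | x i < q} / (k : ℝ)) (#{i | x i ≤ q} / (k : ℝ) - q) := by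
  rw [localDisc1, D1open_image hx, D1closed_image hx, card_image_of_injective _ hx, card_fin]

theorem localDisc1_image_apply (hx : StrictMono x) (i : Fin k) :
    localDisc1 (univ.image x) (x i) = 1 / (2 * k) + |x i - (2 * (i : ℝ) + 1) / (2 * k)| := by
  rw [localDisc1_image hx.injective, card_filter_lt_apply hx, card_filter_le_apply hx,
    ← max_sub_div_add_one_div_sub i.pos.ne']
  push_cast
  rfl

theorem localDisc1_image_le (hx : StrictMono x) (hk : 0 < k) {q : ℝ}
    (hq : q ∈ Set.Icc (0 : ℝ) 1) :
    localDisc1 (univ.image x) q ≤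
      1 / (2 * k) + ⨆ i : Fin k, |x i - (2 * (i : ℝ) + 1) / (2 * k)| := by
  have hbound (j : Fin k) : max (x j - j / k) ((j + 1) / k - x j) ≤
      1 / (2 * k) + ⨆ i : Fin k, |x i - (2 * (i : ℝ) + 1) / (2 * k)| := by
    rw [max_sub_div_add_one_div_sub hk.ne']
    gcongr
    exact le_ciSup (f := fun i : Fin k => |x i - (2 * (i : ℝ) + 1) / (2 * k)|)
      (Finite.bddAbove_range _) j
  have hpos : 0 ≤ 1 / (2 * k) + ⨆ i : Fin k, |x i - (2 * (i : ℝ) + 1) / (2 * k)| :=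
    add_nonneg (by positivity) (Real.iSup_nonneg fun _ => abs_nonneg _)
  rw [localDisc1_image hx.injective]
  apply max_le
  · obtain h | ⟨j, h⟩ := sub_card_filter_lt_div_le hx.monotone hk hq.2
    · exact h.trans hpos
    · exact h.trans ((le_max_left _ _).trans (hbound j))
  · obtain h | ⟨j, h⟩ := card_filter_le_div_sub_le hx.monotone hq.1
    · exact h.trans hpos
    · exact h.trans ((le_max_right _ _).trans (hbound j))

end Image

end Niederreiter

open Niederreiter

/-- Niederreiter's formula for the one-dimensional star discrepancy. -/
theorem stmt18 (k : ℕ) (hk : 0 < k) (x : Fin k → ℝ) (hmono : StrictMono x)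
    (hx : ∀ i, x i ∈ Set.Icc (0 : ℝ) 1) :
    starDisc1 (Finset.univ.image x)
      = 1 / (2 * k) + ⨆ i : Fin k, |x i - (2 * (i : ℝ) + 1) / (2 * k)| := by
  have : Nonempty (Fin k) := ⟨⟨0, hk⟩⟩
  obtain ⟨i, hi⟩ :=
    exists_eq_ciSup_of_finite (f := fun i : Fin k => |x i - (2 * (i : ℝ) + 1) / (2 * k)|)
  rw [starDisc1_eq_biSup]
  refine Real.biSup_eq_of_isGreatest ⟨⟨x i, hx i, ?_⟩, ?_⟩ ?_
  · rw [localDisc1_image_apply hmono, hi]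
  · rintro _ ⟨q, hq, rfl⟩
    exact localDisc1_image_le hmono hk hq
  · exact add_nonneg (by positivity) (Real.iSup_nonneg fun _ => abs_nonneg _)
end
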